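/- Let (X_n) be a Markov chain on ℝ^d with transition kernel P satisfying W₁(Pⁿ(x,·), Pⁿ(y,·)) ≤ D κⁿ |x−y| for all n and all x,y, with D ≥ 1 and κ ∈ (0,1), and suppose sup_{n≥0} (E|X_n|^q)^{1/q} ≤ 1 for some q > 1. Then for every α ∈ (0,1], every bounded α-Hölder continuous function f : ℝ^d → ℂ, and all m, n ∈ ℕ, |Cov(f(X_n), f(X_m))| ≤ 8 D^α κ^{α|m−n|} ‖f‖_∞ Hol_α(f). -/

import Mathlib

open MeasureTheory ProbabilityTheory Real

/-- The 1-Wasserstein distance with respect to a cost `ρ`: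
infimum over couplings with integrable cost of the integral of the cost. -/
noncomputable def W1 {β : Type*} [MeasurableSpace β] (ρ : β → β → ℝ)
    (μ ν : Measure β) : ℝ :=
  sInf { c | ∃ pi : Measure (β × β), IsProbabilityMeasure pi ∧
    pi.map Prod.fst = μ ∧ pi.map Prod.snd = ν ∧
    Integrable (fun p => ρ p.1 p.2) pi ∧ c = ∫ p, ρ p.1 p.2 ∂pi }

/-- `n`-fold iteration of a Markov kernel. -/
noncomputable def kIter {β : Type*} [MeasurableSpace β] (P : Kernel β β) : ℕ → Kernel β β
  | 0 => Kernel.id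
  | n + 1 => P ∘ₖ kIter P n

/-- `(X n)` is a time-homogeneous Markov chain with transition kernel `P`
under the probability measure `Pr`. -/
structure IsMarkovChain {Ω β : Type*} [MeasurableSpace Ω] [MeasurableSpace β]
    (Pr : Measure Ω) (P : Kernel β β) (X : ℕ → Ω → β) : Prop where
  meas : ∀ n, Measurable (X n)
  markov : ∀ (n : ℕ) (g : (Fin (n + 1) → β) → ℝ) (f : β → ℝ),
    Measurable g → Measurable f →
    (∃ Cg, ∀ v, |g v| ≤ Cg) → (∃ Cf, ∀ x, |f x| ≤ Cf) →
    ∫ ω, g (fun i => X i ω) * f (X (n + 1) ω) ∂Pr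
      = ∫ ω, g (fun i => X i ω) * (∫ y, f y ∂(P (X n ω))) ∂Pr

/-- The empirical measure `μ_n = n⁻¹ ∑_{i=1}^n δ_{X_i}`. -/
noncomputable def empMeas {Ω β : Type*} [MeasurableSpace β] (X : ℕ → Ω → β)
    (n : ℕ) (ω : Ω) : Measure β :=
  (n : ENNReal)⁻¹ • ∑ i ∈ Finset.Icc 1 n, Measure.dirac (X i ω)

/-!
Write `ν` for the law of `X n` and `G x = ∫ f d(Pᵏ x)`. The Markov property identifies the joint
law of `(X n, X (n + k))` with `ν ⊗ Pᵏ`, which turns the covariance into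
`∫∫ f x (G x - G y) dν(x) dν(y)`. Integrating the Hölder bound of `f` against a near-optimal
coupling and applying Jensen to the concave map `t ↦ t ^ α` gives
`‖G x - G y‖ ≤ H (W₁(Pᵏ x, Pᵏ y))^α ≤ H (D κᵏ |x - y|)^α`, and Jensen once more bounds
`∫∫ |x - y|^α dν dν` by `(2 E|X n|)^α ≤ 2^α`.
-/

open Set Filter Topology

section Moments
variable {γ : Type*} [MeasurableSpace γ] {μ : Measure γ}

lemma rpow_le_one_add {t α : ℝ} (ht : 0 ≤ t) (hα0 : 0 ≤ α) (hα1 : α ≤ 1) :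
    t ^ α ≤ 1 + t := by
  rcases le_total t 1 with h | h
  · linarith [rpow_le_one ht h hα0]
  · linarith [rpow_le_self_of_one_le h hα1]

lemma MeasureTheory.Integrable.rpow_of_le_one [IsFiniteMeasure μ] {g : γ → ℝ}
    (hg : Integrable g μ) (hg0 : 0 ≤ g) {α : ℝ} (hα0 : 0 ≤ α) (hα1 : α ≤ 1) :
    Integrable (fun x => g x ^ α) μ := by
  refine ((integrable_const 1).add hg).mono' (hg.aemeasurable.pow_const α).aestronglyMeasurable
    (ae_of_all _ fun x => ?_)
  rw [norm_of_nonneg (rpow_nonneg (hg0 x) α)]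
  exact rpow_le_one_add (hg0 x) hα0 hα1

lemma integral_rpow_le_rpow_integral [IsProbabilityMeasure μ] {g : γ → ℝ}
    (hg : Integrable g μ) (hg0 : 0 ≤ g) {α : ℝ} (hα0 : 0 ≤ α) (hα1 : α ≤ 1) :
    ∫ x, g x ^ α ∂μ ≤ (∫ x, g x ∂μ) ^ α :=
  (concaveOn_rpow hα0 hα1).le_map_integral (continuousOn_id.rpow_const fun _ _ => Or.inr hα0)
    isClosed_Ici (ae_of_all _ hg0) hg (hg.rpow_of_le_one hg0 hα0 hα1)

lemma lintegral_enorm_le_one_of_lintegral_rpow_le_one [IsProbabilityMeasure μ]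
    {E : Type*} [NormedAddCommGroup E] {g : γ → E} (hg : AEStronglyMeasurable g μ)
    {q : ℝ} (hq : 1 ≤ q) (hmom : ∫⁻ x, ‖g x‖ₑ ^ q ∂μ ≤ 1) :
    ∫⁻ x, ‖g x‖ₑ ∂μ ≤ 1 := by
  have hq0 : 0 < q := by linarith
  rw [← eLpNorm_one_eq_lintegral_enorm]
  calc eLpNorm g 1 μ ≤ eLpNorm g (ENNReal.ofReal q) μ :=
        eLpNorm_le_eLpNorm_of_exponent_le (by simpa using hq) hg
    _ ≤ 1 := by
        rw [eLpNorm_eq_lintegral_rpow_enorm_toReal (by simpa using hq0) ENNReal.ofReal_ne_top,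
          ENNReal.toReal_ofReal hq0.le]
        exact ENNReal.rpow_le_one hmom (by positivity)

lemma integrable_of_lintegral_rpow_le_one [IsProbabilityMeasure μ] {E : Type*}
    [NormedAddCommGroup E] {g : γ → E} (hg : AEStronglyMeasurable g μ) {q : ℝ} (hq : 1 ≤ q)
    (hmom : ∫⁻ x, ‖g x‖ₑ ^ q ∂μ ≤ 1) : Integrable g μ :=
  ⟨hg, (lintegral_enorm_le_one_of_lintegral_rpow_le_one hg hq hmom).trans_lt ENNReal.one_lt_top⟩

lemma integral_norm_le_one_of_lintegral_rpow_le_one [IsProbabilityMeasure μ] {E : Type*}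
    [NormedAddCommGroup E] {g : γ → E} (hg : AEStronglyMeasurable g μ) {q : ℝ} (hq : 1 ≤ q)
    (hmom : ∫⁻ x, ‖g x‖ₑ ^ q ∂μ ≤ 1) : ∫ x, ‖g x‖ ∂μ ≤ 1 := by
  rw [integral_norm_eq_lintegral_enorm hg]
  exact ENNReal.toReal_le_of_le_ofReal zero_le_one
    (by simpa using lintegral_enorm_le_one_of_lintegral_rpow_le_one hg hq hmom)

end Moments

section Wasserstein
variable {β : Type*} [MeasurableSpace β] [PseudoMetricSpace β]
  {E : Type*} [NormedAddCommGroup E] [NormedSpace ℝ E]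

lemma W1_dist_nonneg (μ₁ μ₂ : Measure β) : 0 ≤ W1 dist μ₁ μ₂ :=
  Real.sInf_nonneg fun _ ⟨_, _, _, _, _, hc⟩ => hc ▸ integral_nonneg fun _ => dist_nonneg

lemma norm_integral_sub_le_of_coupling {f : β → E} {μ₁ μ₂ : Measure β}
    (hf₁ : Integrable f μ₁) (hf₂ : Integrable f μ₂) {H α : ℝ} (hH : 0 ≤ H) (hα0 : 0 ≤ α)
    (hα1 : α ≤ 1) (hHol : ∀ x y, ‖f x - f y‖ ≤ H * dist x y ^ α)
    {γ : Measure (β × β)} [IsProbabilityMeasure γ]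
    (h₁ : γ.map Prod.fst = μ₁) (h₂ : γ.map Prod.snd = μ₂)
    (hγ : Integrable (fun p => dist p.1 p.2) γ) :
    ‖∫ x, f x ∂μ₁ - ∫ x, f x ∂μ₂‖ ≤ H * (∫ p, dist p.1 p.2 ∂γ) ^ α := by
  subst h₁ h₂
  have i₁ : Integrable (fun p => f p.1) γ := hf₁.comp_measurable measurable_fst
  have i₂ : Integrable (fun p => f p.2) γ := hf₂.comp_measurable measurable_snd
  rw [integral_map measurable_fst.aemeasurable hf₁.1,
    integral_map measurable_snd.aemeasurable hf₂.1, ← integral_sub i₁ i₂]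
  calc ‖∫ p, f p.1 - f p.2 ∂γ‖ ≤ ∫ p, ‖f p.1 - f p.2‖ ∂γ := norm_integral_le_integral_norm _
    _ ≤ ∫ p, H * dist p.1 p.2 ^ α ∂γ :=
        integral_mono (i₁.sub i₂).norm
          ((hγ.rpow_of_le_one (fun _ => dist_nonneg) hα0 hα1).const_mul H) fun p => hHol p.1 p.2
    _ = H * ∫ p, dist p.1 p.2 ^ α ∂γ := integral_const_mul _ _
    _ ≤ H * (∫ p, dist p.1 p.2 ∂γ) ^ α := by
        gcongr
        exact integral_rpow_le_rpow_integral hγ (fun _ => dist_nonneg) hα0 hα1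

-- Without a coupling of integrable cost, `W1` is `sInf ∅ = 0` and the bound would be false.
lemma norm_integral_sub_le_W1_rpow {f : β → E} {μ₁ μ₂ : Measure β}
    (hf₁ : Integrable f μ₁) (hf₂ : Integrable f μ₂) {H α : ℝ} (hH : 0 ≤ H) (hα0 : 0 ≤ α)
    (hα1 : α ≤ 1) (hHol : ∀ x y, ‖f x - f y‖ ≤ H * dist x y ^ α)
    (hcoupling : ∃ γ : Measure (β × β), IsProbabilityMeasure γ ∧ γ.map Prod.fst = μ₁ ∧
      γ.map Prod.snd = μ₂ ∧ Integrable (fun p => dist p.1 p.2) γ) :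
    ‖∫ x, f x ∂μ₁ - ∫ x, f x ∂μ₂‖ ≤ H * W1 dist μ₁ μ₂ ^ α := by
  obtain ⟨γ, hγ, h₁, h₂, hint⟩ := hcoupling
  set S := {c | ∃ γ : Measure (β × β), IsProbabilityMeasure γ ∧
      γ.map Prod.fst = μ₁ ∧ γ.map Prod.snd = μ₂ ∧ Integrable (fun p => dist p.1 p.2) γ ∧
      c = ∫ p, dist p.1 p.2 ∂γ}
  have hW : W1 dist μ₁ μ₂ = sInf S := rfl
  have hcost : ∀ c ∈ S, 0 ≤ c ∧ ‖∫ x, f x ∂μ₁ - ∫ x, f x ∂μ₂‖ ≤ H * c ^ α := by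
    rintro _ ⟨γ, hγ, h₁, h₂, hint, rfl⟩
    exact ⟨integral_nonneg fun _ => dist_nonneg,
      norm_integral_sub_le_of_coupling hf₁ hf₂ hH hα0 hα1 hHol h₁ h₂ hint⟩
  have hcont :
      Tendsto (fun c => H * c ^ α) (𝓝[>] (W1 dist μ₁ μ₂)) (𝓝 (H * W1 dist μ₁ μ₂ ^ α)) :=
    ((continuousAt_const.mul (continuousAt_rpow_const _ _ (Or.inr hα0))).tendsto).mono_left
      nhdsWithin_le_nhds
  refine ge_of_tendsto hcont (eventually_nhdsWithin_of_forall fun c hc => ?_)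
  obtain ⟨c', hc', hc'c⟩ :=
    exists_lt_of_csInf_lt (s := S) ⟨_, γ, hγ, h₁, h₂, hint, rfl⟩ (hW ▸ hc :)
  obtain ⟨hc'0, hbound⟩ := hcost c' hc'
  exact hbound.trans (by gcongr)

end Wasserstein

section FirstMoment
variable {E : Type*} [NormedAddCommGroup E] [MeasurableSpace E]
  {μ₁ μ₂ : Measure E} [IsProbabilityMeasure μ₁] [IsProbabilityMeasure μ₂]

lemma integrable_dist_prod (h₁ : Integrable id μ₁) (h₂ : Integrable id μ₂) :
    Integrable (fun p : E × E => dist p.1 p.2) (μ₁.prod μ₂) := by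
  simpa [dist_eq_norm] using ((h₁.comp_fst μ₂).sub (h₂.comp_snd μ₁)).norm

lemma integral_dist_prod_le (h₁ : Integrable id μ₁) (h₂ : Integrable id μ₂) :
    ∫ p : E × E, dist p.1 p.2 ∂(μ₁.prod μ₂) ≤ ∫ x, ‖x‖ ∂μ₁ + ∫ x, ‖x‖ ∂μ₂ := by
  have i₁ : Integrable (fun p : E × E => ‖p.1‖) (μ₁.prod μ₂) := h₁.norm.comp_fst μ₂
  have i₂ : Integrable (fun p : E × E => ‖p.2‖) (μ₁.prod μ₂) := h₂.norm.comp_snd μ₁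
  calc ∫ p : E × E, dist p.1 p.2 ∂(μ₁.prod μ₂) ≤ ∫ p : E × E, ‖p.1‖ + ‖p.2‖ ∂(μ₁.prod μ₂) :=
        integral_mono (integrable_dist_prod h₁ h₂) (i₁.add i₂) fun p => dist_le_norm_add_norm _ _
    _ = ∫ x, ‖x‖ ∂μ₁ + ∫ x, ‖x‖ ∂μ₂ := by
        rw [integral_add i₁ i₂, integral_fun_fst (fun x : E => ‖x‖),
          integral_fun_snd (fun x : E => ‖x‖)]
        simp

lemma norm_integral_sub_le_rpow_of_W1_le {F : Type*} [NormedAddCommGroup F] [NormedSpace ℝ F]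
    (h₁ : Integrable id μ₁) (h₂ : Integrable id μ₂) {f : E → F}
    (hf₁ : Integrable f μ₁) (hf₂ : Integrable f μ₂) {H α c : ℝ} (hH : 0 ≤ H) (hα0 : 0 ≤ α)
    (hα1 : α ≤ 1) (hHol : ∀ x y, ‖f x - f y‖ ≤ H * dist x y ^ α) (hW : W1 dist μ₁ μ₂ ≤ c) :
    ‖∫ x, f x ∂μ₁ - ∫ x, f x ∂μ₂‖ ≤ H * c ^ α :=
  (norm_integral_sub_le_W1_rpow hf₁ hf₂ hH hα0 hα1 hHol
    ⟨μ₁.prod μ₂, inferInstance, by simp, by simp, integrable_dist_prod h₁ h₂⟩).trans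
    (by have := W1_dist_nonneg μ₁ μ₂; gcongr)

lemma integral_rpow_mul_dist_prod_le {ν : Measure E} [IsProbabilityMeasure ν]
    (hν : Integrable id ν) {L α : ℝ} (hL : 0 ≤ L) (hα0 : 0 ≤ α) (hα1 : α ≤ 1) :
    ∫ p : E × E, (L * dist p.1 p.2) ^ α ∂(ν.prod ν) ≤ (2 * L * ∫ x, ‖x‖ ∂ν) ^ α := by
  have hint := (integrable_dist_prod hν hν).const_mul L
  calc ∫ p : E × E, (L * dist p.1 p.2) ^ α ∂(ν.prod ν)
      ≤ (∫ p : E × E, L * dist p.1 p.2 ∂(ν.prod ν)) ^ α :=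
        integral_rpow_le_rpow_integral hint (fun _ => mul_nonneg hL dist_nonneg) hα0 hα1
    _ ≤ (L * (∫ x, ‖x‖ ∂ν + ∫ x, ‖x‖ ∂ν)) ^ α := by
        rw [integral_const_mul]
        gcongr
        exact integral_dist_prod_le hν hν
    _ = (2 * L * ∫ x, ‖x‖ ∂ν) ^ α := by ring_nf

end FirstMoment

lemma integral_mul_sub_integral_mul_integral {β 𝕜 : Type*} [MeasurableSpace β] [RCLike 𝕜]
    {ν : Measure β} [IsProbabilityMeasure ν] {f G : β → 𝕜} (hf : Integrable f ν)
    (hG : Integrable G ν) (hfG : Integrable (fun x => f x * G x) ν) :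
    ∫ x, f x * G x ∂ν - (∫ x, f x ∂ν) * ∫ x, G x ∂ν
      = ∫ p, f p.1 * (G p.1 - G p.2) ∂(ν.prod ν) := by
  simp_rw [mul_sub]
  rw [integral_sub (hfG.comp_fst ν) (hf.mul_prod hG),
    integral_fun_fst (fun x => f x * G x), integral_prod_mul]
  simp

section MarkovChain
variable {Ω β : Type*} [MeasurableSpace Ω] [MeasurableSpace β]
  {Pr : Measure Ω} {P : Kernel β β} [IsMarkovKernel P] {X : ℕ → Ω → β}

instance isMarkovKernel_kIter (k : ℕ) : IsMarkovKernel (kIter P k) := by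
  induction k with
  | zero => rw [kIter]; infer_instance
  | succ k ih => rw [kIter]; infer_instance

lemma abs_integral_kernel_le {κ : Kernel β β} [IsMarkovKernel κ] {h : β → ℝ} {C : ℝ}
    (hC : ∀ x, |h x| ≤ C) (x : β) : |∫ y, h y ∂(κ x)| ≤ C := by
  simpa using norm_integral_le_of_norm_le_const (μ := κ x)
    (ae_of_all _ hC : ∀ᵐ y ∂(κ x), ‖h y‖ ≤ C)

lemma IsMarkovChain.integral_mul_comp_add (hX : IsMarkovChain Pr P X) (n k : ℕ) {g h : β → ℝ}
    (hg : Measurable g) (hh : Measurable h) (hgB : ∃ C, ∀ x, |g x| ≤ C)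
    (hhB : ∃ C, ∀ x, |h x| ≤ C) :
    ∫ ω, g (X n ω) * h (X (n + k) ω) ∂Pr
      = ∫ ω, g (X n ω) * ∫ y, h y ∂(kIter P k (X n ω)) ∂Pr := by
  induction k generalizing h with
  | zero =>
    simp only [kIter, Nat.add_zero, Kernel.id_apply, integral_dirac' _ _ hh.stronglyMeasurable]
  | succ k ih =>
    obtain ⟨C, hC⟩ := hhB
    have hPh : Measurable fun x => ∫ y, h y ∂(P x) :=
      (hh.stronglyMeasurable.integral_kernel (κ := P)).measurable
    have hmarkov := hX.markov (n + k) (fun v => g (v ⟨n, by omega⟩)) h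
      (hg.comp (measurable_pi_apply _)) hh (hgB.imp fun C hC v => hC _) ⟨C, hC⟩
    rw [← add_assoc, hmarkov, ih hPh ⟨C, abs_integral_kernel_le hC⟩]
    congr with ω
    rw [kIter, Kernel.integral_comp]
    exact .of_bound hh.aestronglyMeasurable C (ae_of_all _ hC)

lemma IsMarkovChain.map_pair_eq_compProd [IsFiniteMeasure Pr] (hX : IsMarkovChain Pr P X)
    (n k : ℕ) :
    Pr.map (fun ω => (X n ω, X (n + k) ω)) = Pr.map (X n) ⊗ₘ kIter P k := by
  have hXn := hX.meas n
  refine Measure.ext_prod fun {s t} hs ht => ?_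
  have hind : ∀ {u : Set β}, MeasurableSet u → ∃ C, ∀ x, |u.indicator (1 : β → ℝ) x| ≤ C :=
    fun {u} _ => ⟨1, fun x => by by_cases hx : x ∈ u <;> simp [hx]⟩
  have key := hX.integral_mul_comp_add n k (measurable_one.indicator hs)
    (measurable_one.indicator ht) (hind hs) (hind ht)
  have hst : StronglyMeasurable ((s ×ˢ t).indicator (1 : β × β → ℝ)) :=
    (measurable_one.indicator (hs.prod ht)).stronglyMeasurable
  rw [← ENNReal.toReal_eq_toReal_iff' (measure_ne_top _ _) (measure_ne_top _ _),
    ← measureReal_def, ← measureReal_def, ← integral_indicator_one (hs.prod ht),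
    ← integral_indicator_one (hs.prod ht),
    integral_map (hXn.prodMk (hX.meas _)).aemeasurable hst.aestronglyMeasurable,
    Measure.integral_compProd ((integrable_const 1).indicator (hs.prod ht)),
    integral_map hXn.aemeasurable hst.integral_kernel_prod_right'.aestronglyMeasurable]
  simpa [Set.indicator_prod_one, integral_const_mul] using key

lemma IsMarkovChain.integral_comp_pair [IsFiniteMeasure Pr] (hX : IsMarkovChain Pr P X)
    (n k : ℕ) {E : Type*} [NormedAddCommGroup E] [NormedSpace ℝ E] {φ : β × β → E}
    (hφ : Integrable φ (Pr.map (X n) ⊗ₘ kIter P k)) :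
    ∫ ω, φ (X n ω, X (n + k) ω) ∂Pr = ∫ x, ∫ y, φ (x, y) ∂(kIter P k x) ∂(Pr.map (X n)) := by
  rw [← Measure.integral_compProd hφ, ← hX.map_pair_eq_compProd,
    integral_map ((hX.meas n).prodMk (hX.meas _)).aemeasurable]
  rw [hX.map_pair_eq_compProd]
  exact hφ.aestronglyMeasurable

lemma IsMarkovChain.integral_mul_sub_eq_integral_prod [IsProbabilityMeasure Pr]
    (hX : IsMarkovChain Pr P X) (n k : ℕ) {𝕜 : Type*} [RCLike 𝕜] {f : β → 𝕜}
    (hf : StronglyMeasurable f) {B : ℝ} (hfB : ∀ x, ‖f x‖ ≤ B) :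
    ∫ ω, f (X n ω) * f (X (n + k) ω) ∂Pr - (∫ ω, f (X n ω) ∂Pr) * ∫ ω, f (X (n + k) ω) ∂Pr
      = ∫ p, f p.1 * (∫ y, f y ∂(kIter P k p.1) - ∫ y, f y ∂(kIter P k p.2))
          ∂((Pr.map (X n)).prod (Pr.map (X n))) := by
  set ν := Pr.map (X n)
  have : IsProbabilityMeasure ν := Measure.isProbabilityMeasure_map (hX.meas n).aemeasurable
  set G : β → 𝕜 := fun x => ∫ y, f y ∂(kIter P k x)
  have hfν : Integrable f ν := .of_bound hf.aestronglyMeasurable B (ae_of_all _ hfB)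
  have hGν : Integrable G ν := .of_bound hf.integral_kernel.aestronglyMeasurable B
    (ae_of_all _ fun x => by
      simpa using norm_integral_le_of_norm_le_const (μ := kIter P k x) (ae_of_all _ hfB))
  have hf₂ : Integrable (fun p : β × β => f p.2) (ν ⊗ₘ kIter P k) :=
    .of_bound (hf.comp_measurable measurable_snd).aestronglyMeasurable B (ae_of_all _ (hfB ·.2))
  have h₁ : ∫ ω, f (X n ω) * f (X (n + k) ω) ∂Pr = ∫ x, f x * G x ∂ν := by
    rw [hX.integral_comp_pair n k (φ := fun p => f p.1 * f p.2)
      (hf₂.bdd_mul (hf.comp_measurable measurable_fst).aestronglyMeasurable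
        (ae_of_all _ (hfB ·.1)))]
    simp_rw [integral_const_mul]
    rfl
  rw [h₁, hX.integral_comp_pair n k hf₂,
    ← integral_map (hX.meas n).aemeasurable hf.aestronglyMeasurable,
    integral_mul_sub_integral_mul_integral hfν hGν
      (hGν.bdd_mul hf.aestronglyMeasurable (ae_of_all _ hfB))]

end MarkovChain

section MarkovChainNormed
variable {Ω E : Type*} [MeasurableSpace Ω] [NormedAddCommGroup E] [MeasurableSpace E]
  [BorelSpace E] [SecondCountableTopology E]
  {Pr : Measure Ω} [IsFiniteMeasure Pr] {P : Kernel E E} [IsMarkovKernel P] {X : ℕ → Ω → E}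

lemma IsMarkovChain.ae_integrable_kIter (hX : IsMarkovChain Pr P X) (n k : ℕ)
    (hint : Integrable (X (n + k)) Pr) :
    ∀ᵐ x ∂(Pr.map (X n)), Integrable id (kIter P k x) := by
  have hsnd : Integrable (fun p : E × E => p.2) (Pr.map (X n) ⊗ₘ kIter P k) := by
    rw [← hX.map_pair_eq_compProd, integrable_map_measure measurable_snd.aestronglyMeasurable
      ((hX.meas n).prodMk (hX.meas _)).aemeasurable]
    exact hint
  exact ((Measure.integrable_compProd_iff hsnd.aestronglyMeasurable).mp hsnd).1

end MarkovChainNormed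

section Covariance
variable {Ω E : Type*} [MeasurableSpace Ω] [NormedAddCommGroup E] [MeasurableSpace E]
  [BorelSpace E] [SecondCountableTopology E]
  {Pr : Measure Ω} [IsProbabilityMeasure Pr] {P : Kernel E E} [IsMarkovKernel P]
  {X : ℕ → Ω → E} {L H α : ℝ}

lemma IsMarkovChain.ae_norm_integral_kIter_sub_le (hX : IsMarkovChain Pr P X) (n k : ℕ)
    (hcontr : ∀ x y, W1 dist (kIter P k x) (kIter P k y) ≤ L * dist x y)
    (hm : Integrable (X (n + k)) Pr) {F : Type*} [NormedAddCommGroup F] [NormedSpace ℝ F]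
    {f : E → F} (hf : StronglyMeasurable f) {B : ℝ} (hfB : ∀ x, ‖f x‖ ≤ B)
    (hH : 0 ≤ H) (hα0 : 0 ≤ α) (hα1 : α ≤ 1) (hHol : ∀ x y, ‖f x - f y‖ ≤ H * dist x y ^ α) :
    ∀ᵐ p ∂((Pr.map (X n)).prod (Pr.map (X n))),
      ‖∫ y, f y ∂(kIter P k p.1) - ∫ y, f y ∂(kIter P k p.2)‖ ≤ H * (L * dist p.1 p.2) ^ α := by
  have hae := hX.ae_integrable_kIter n k hm
  have hfi : ∀ x, Integrable f (kIter P k x) := fun x =>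
    .of_bound hf.aestronglyMeasurable B (ae_of_all _ hfB)
  filter_upwards [Measure.quasiMeasurePreserving_fst.ae hae,
    Measure.quasiMeasurePreserving_snd.ae hae] with p h₁ h₂
  exact norm_integral_sub_le_rpow_of_W1_le h₁ h₂ (hfi _) (hfi _) hH hα0 hα1 hHol (hcontr _ _)

theorem IsMarkovChain.norm_integral_mul_sub_le (hX : IsMarkovChain Pr P X) (n k : ℕ)
    (hL : 0 ≤ L) (hcontr : ∀ x y, W1 dist (kIter P k x) (kIter P k y) ≤ L * dist x y)
    (hn : Integrable (X n) Pr) (hm : Integrable (X (n + k)) Pr) {𝕜 : Type*} [RCLike 𝕜]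
    {f : E → 𝕜} (hf : StronglyMeasurable f) {B : ℝ} (hfB : ∀ x, ‖f x‖ ≤ B)
    (hH : 0 ≤ H) (hα0 : 0 ≤ α) (hα1 : α ≤ 1) (hHol : ∀ x y, ‖f x - f y‖ ≤ H * dist x y ^ α) :
    ‖∫ ω, f (X n ω) * f (X (n + k) ω) ∂Pr - (∫ ω, f (X n ω) ∂Pr) * ∫ ω, f (X (n + k) ω) ∂Pr‖
      ≤ B * H * (2 * L * ∫ ω, ‖X n ω‖ ∂Pr) ^ α := by
  rw [hX.integral_mul_sub_eq_integral_prod n k hf hfB]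
  set ν := Pr.map (X n)
  have : IsProbabilityMeasure ν := Measure.isProbabilityMeasure_map (hX.meas n).aemeasurable
  have hB : 0 ≤ B := (norm_nonneg _).trans (hfB 0)
  have hν : Integrable id ν :=
    (integrable_map_measure aestronglyMeasurable_id (hX.meas n).aemeasurable).mpr hn
  have hdist : Integrable (fun p : E × E => (L * dist p.1 p.2) ^ α) (ν.prod ν) :=
    ((integrable_dist_prod hν hν).const_mul L).rpow_of_le_one
      (fun _ => mul_nonneg hL dist_nonneg) hα0 hα1
  rw [← integral_map (hX.meas n).aemeasurable continuous_norm.aestronglyMeasurable]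
  calc ‖∫ p, f p.1 * (∫ y, f y ∂(kIter P k p.1) - ∫ y, f y ∂(kIter P k p.2)) ∂(ν.prod ν)‖
      ≤ ∫ p, B * (H * (L * dist p.1 p.2) ^ α) ∂(ν.prod ν) := by
        refine norm_integral_le_of_norm_le ((hdist.const_mul H).const_mul B) ?_
        filter_upwards [hX.ae_norm_integral_kIter_sub_le n k hcontr hm hf hfB hH hα0 hα1 hHol]
          with p hp
        rw [norm_mul]
        exact mul_le_mul (hfB _) hp (norm_nonneg _) hB
    _ = B * H * ∫ p, (L * dist p.1 p.2) ^ α ∂(ν.prod ν) := by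
        rw [integral_const_mul, integral_const_mul, mul_assoc]
    _ ≤ B * H * (2 * L * ∫ x, ‖x‖ ∂ν) ^ α := by
        gcongr
        exact integral_rpow_mul_dist_prod_le hν hL hα0 hα1

end Covariance

lemma rpow_two_mul_mul_pow_le {D κ M α : ℝ} (k : ℕ) (hD : 0 ≤ D) (hκ : 0 ≤ κ) (hM0 : 0 ≤ M)
    (hM1 : M ≤ 1) (hα0 : 0 ≤ α) (hα1 : α ≤ 1) :
    (2 * (D * κ ^ k) * M) ^ α ≤ 2 * D ^ α * κ ^ (α * k) := by
  have hDκ : 0 ≤ D * κ ^ k := by positivity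
  calc (2 * (D * κ ^ k) * M) ^ α ≤ (2 * (D * κ ^ k)) ^ α := by
        gcongr ?_ ^ α
        exact mul_le_of_le_one_right (by positivity) hM1
    _ = 2 ^ α * D ^ α * κ ^ (α * k) := by
        rw [mul_rpow zero_le_two hDκ, mul_rpow hD (by positivity), ← rpow_natCast,
          ← rpow_mul hκ, mul_comm (k : ℝ)]
        ring
    _ ≤ 2 * D ^ α * κ ^ (α * k) := by
        gcongr
        exact rpow_le_self_of_one_le one_le_two hα1

theorem covariance_decay_of_holder_general {Ω : Type*} [MeasurableSpace Ω]
    (Pr : Measure Ω) [IsProbabilityMeasure Pr] (d : ℕ)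
    (P : Kernel (EuclideanSpace ℝ (Fin d)) (EuclideanSpace ℝ (Fin d))) [IsMarkovKernel P]
    (X : ℕ → Ω → EuclideanSpace ℝ (Fin d)) (hchain : IsMarkovChain Pr P X)
    (D κ : ℝ) (hD : 1 ≤ D) (hκ : κ ∈ Set.Ioo (0 : ℝ) 1)
    -- Assumption 1: W₁(Pⁿ(x,·), Pⁿ(y,·)) ≤ D κⁿ |x - y|
    (hcontr : ∀ (n : ℕ) (x y : EuclideanSpace ℝ (Fin d)),
      W1 dist (kIter P n x) (kIter P n y) ≤ D * κ ^ n * dist x y)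
    (q : ℝ) (hq : 1 < q)
    -- Assumption 2 with M = 1: sup_n (E |X_n|^q)^(1/q) ≤ 1
    (hmom : ∀ n : ℕ, ∫⁻ ω, (‖X n ω‖₊ : ENNReal) ^ q ∂Pr ≤ 1)
    (α : ℝ) (hα : α ∈ Set.Ioc (0 : ℝ) 1)
    (f : EuclideanSpace ℝ (Fin d) → ℂ) (hf_meas : Measurable f)
    -- f is bounded by B
    (B : ℝ) (hfB : ∀ x, ‖f x‖ ≤ B)
    -- f is α-Hölder with constant H
    (H : ℝ) (hH : 0 ≤ H)
    (hHol : ∀ x y, ‖f x - f y‖ ≤ H * dist x y ^ α)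
    (m n : ℕ) :
    ‖(∫ ω, f (X n ω) * f (X m ω) ∂Pr) -
        (∫ ω, f (X n ω) ∂Pr) * (∫ ω, f (X m ω) ∂Pr)‖
      ≤ 8 * D ^ α * κ ^ (α * |(m : ℝ) - n|) * B * H := by
  wlog hnm : n ≤ m generalizing m n
  · simpa only [mul_comm, abs_sub_comm] using this n m (le_of_not_ge hnm)
  obtain ⟨k, rfl⟩ := Nat.exists_eq_add_of_le hnm
  obtain ⟨hκ0, -⟩ := hκ
  obtain ⟨hα0, hα1⟩ := hα
  have hint : ∀ j, Integrable (X j) Pr := fun j =>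
    integrable_of_lintegral_rpow_le_one (hchain.meas j).aestronglyMeasurable hq.le (hmom j)
  have hM := integral_norm_le_one_of_lintegral_rpow_le_one
    (hchain.meas n).aestronglyMeasurable hq.le (hmom n)
  have hB : 0 ≤ B := (norm_nonneg _).trans (hfB 0)
  have hconst : 0 ≤ B * H * (D ^ α * κ ^ (α * k)) := by positivity
  have habs : |((n + k : ℕ) : ℝ) - n| = k := by push_cast; simp
  rw [habs]
  calc ‖_‖ ≤ B * H * (2 * (D * κ ^ k) * ∫ ω, ‖X n ω‖ ∂Pr) ^ α :=
        hchain.norm_integral_mul_sub_le n k (by positivity) (hcontr k) (hint n) (hint (n + k))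
          hf_meas.stronglyMeasurable hfB hH hα0.le hα1 hHol
    _ ≤ B * H * (2 * D ^ α * κ ^ (α * k)) := by
        gcongr
        exact rpow_two_mul_mul_pow_le k (by linarith) hκ0.le
          (integral_nonneg fun _ => norm_nonneg _) hM hα0.le hα1
    _ ≤ 8 * D ^ α * κ ^ (α * k) * B * H := by linarith

/-- **Lemma (covariance decay for Hölder functions).** For an exponentially
`W₁`-contracting Markov chain on `ℝ^d` with `q`-th moments bounded by 1 (for the chain,
the initial distribution and the invariant measure), every bounded `α`-Hölder function
`f` with sup-norm bound `B` and Hölder constant `H` satisfies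
`|Cov(f(X_n), f(X_m))| ≤ 8 D^α κ^(α|m-n|) B H`. -/
theorem covariance_decay_of_holder {Ω : Type*} [MeasurableSpace Ω]
    (Pr : Measure Ω) [IsProbabilityMeasure Pr] (d : ℕ)
    (P : Kernel (EuclideanSpace ℝ (Fin d)) (EuclideanSpace ℝ (Fin d))) [IsMarkovKernel P]
    (X : ℕ → Ω → EuclideanSpace ℝ (Fin d)) (hchain : IsMarkovChain Pr P X)
    (D κ : ℝ) (hD : 1 ≤ D) (hκ : κ ∈ Set.Ioo (0 : ℝ) 1)
    -- Assumption 1: W₁(Pⁿ(x,·), Pⁿ(y,·)) ≤ D κⁿ |x - y|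
    (hcontr : ∀ (n : ℕ) (x y : EuclideanSpace ℝ (Fin d)),
      W1 dist (kIter P n x) (kIter P n y) ≤ D * κ ^ n * dist x y)
    (q : ℝ) (hq : 1 < q)
    -- Assumption 2 with M = 1: sup_n (E |X_n|^q)^(1/q) ≤ 1
    (hmom : ∀ n : ℕ, ∫⁻ ω, (‖X n ω‖₊ : ENNReal) ^ q ∂Pr ≤ 1)
    (μ : Measure (EuclideanSpace ℝ (Fin d))) [IsProbabilityMeasure μ] (hinv : μ.bind P = μ)
    -- the invariant measure satisfies the same moment bound
    (hmomμ : ∫⁻ x, (‖x‖₊ : ENNReal) ^ q ∂μ ≤ 1)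
    (α : ℝ) (hα : α ∈ Set.Ioc (0 : ℝ) 1)
    (f : EuclideanSpace ℝ (Fin d) → ℂ) (hf_meas : Measurable f)
    -- f is bounded by B
    (B : ℝ) (hfB : ∀ x, ‖f x‖ ≤ B)
    -- f is α-Hölder with constant H
    (H : ℝ) (hH : 0 ≤ H)
    (hHol : ∀ x y, ‖f x - f y‖ ≤ H * dist x y ^ α)
    (m n : ℕ) :
    ‖(∫ ω, f (X n ω) * f (X m ω) ∂Pr) -
        (∫ ω, f (X n ω) ∂Pr) * (∫ ω, f (X m ω) ∂Pr)‖
      ≤ 8 * D ^ α * κ ^ (α * |(m : ℝ) - n|) * B * H :=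
  covariance_decay_of_holder_general Pr d P X hchain D κ hD hκ hcontr q hq hmom α hα f hf_meas B hfB
    H hH hHol m n
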